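/- Let h ∈ ℚ[[X]] be a formal power series with constant coefficient 1 which is even, i.e. h(−X) = h(X), and let ψ ∈ ℚ[[t]] be the unique power series with zero constant coefficient satisfying ψ'(X/h(X)) = h(X). Then ψ is odd: the coefficient of t^{2k} in ψ is 0 for every integer k ≥ 0. -/

import Mathlib

open PowerSeries
open scoped PowerSeries

/-- `psubst f g` is the formal power series `g(f)` obtained by substituting the power
series `f` (which is assumed to have zero constant coefficient) for the variable in `g`. -/
noncomputable def psubst (f g : ℚ⟦X⟧) : ℚ⟦X⟧ :=
  PowerSeries.mk fun n =>
    PowerSeries.coeff n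
      (∑ k ∈ Finset.range (n + 1), PowerSeries.C (PowerSeries.coeff k g) * f ^ k)

/-!
Since `h` is even, so is `1/h`, hence `f = X/h` is odd. Substitution commutes with
`X ↦ -X` in the sense that `g(-f) = g(-X) ∘ f` and `g(f(-X)) = g(f)(-X)`, so
`ψ'(-X)(f) = ψ'(-f) = ψ'(f(-X)) = h(-X) = h = ψ'(f)`. Substituting `X · u` with `u(0) ≠ 0` is
injective (its coefficient matrix is triangular with invertible diagonal), so `ψ'` is even;
as `ψ(0) = 0`, `ψ` is odd.
-/

section Parity

variable {R : Type*} [CommRing R]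

theorem PowerSeries.coeff_eq_zero_of_rescale_neg_one_eq [NoZeroDivisors R] [CharZero R]
    {f : R⟦X⟧} (hf : rescale (-1 : R) f = f) {n : ℕ} (hn : Odd n) : coeff n f = 0 := by
  have h := congrArg (coeff n) hf
  rw [coeff_rescale, hn.neg_one_pow, neg_one_mul, neg_eq_iff_add_eq_zero, ← two_mul] at h
  exact (mul_eq_zero.mp h).resolve_left two_ne_zero

theorem PowerSeries.coeff_two_mul_eq_zero_of_derivative_even [IsDomain R] [CharZero R]
    {ψ : R⟦X⟧} (hψ0 : constantCoeff ψ = 0) (hψ' : rescale (-1 : R) (d⁄dX R ψ) = d⁄dX R ψ)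
    (k : ℕ) : coeff (2 * k) ψ = 0 := by
  cases k with
  | zero => simpa using hψ0
  | succ m =>
    have h := coeff_eq_zero_of_rescale_neg_one_eq hψ' (odd_two_mul_add_one m)
    rw [coeff_derivative] at h
    exact (mul_eq_zero.mp h).resolve_right (Nat.cast_add_one_ne_zero _)

end Parity

theorem PowerSeries.rescale_inv {k : Type*} [Field k] (a : k) (φ : k⟦X⟧) :
    rescale a φ⁻¹ = (rescale a φ)⁻¹ := by
  have hc : constantCoeff (rescale a φ) = constantCoeff φ := by
    rw [← coeff_zero_eq_constantCoeff_apply, coeff_rescale, pow_zero, one_mul,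
      coeff_zero_eq_constantCoeff_apply]
  by_cases hφ : constantCoeff φ = 0
  · rw [inv_eq_zero.mpr hφ, inv_eq_zero.mpr (hc.trans hφ), map_zero]
  · rw [eq_inv_iff_mul_eq_one (hc ▸ hφ), ← map_mul, PowerSeries.inv_mul_cancel _ hφ, map_one]

lemma coeff_psubst (f g : ℚ⟦X⟧) (n : ℕ) :
    coeff n (psubst f g) = ∑ k ∈ Finset.range (n + 1), coeff k g * coeff n (f ^ k) := by
  simp [psubst, coeff_mk]

lemma psubst_rescale_left (a : ℚ) (f g : ℚ⟦X⟧) :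
    psubst (rescale a f) g = rescale a (psubst f g) := by
  ext n
  rw [coeff_rescale, coeff_psubst, coeff_psubst, Finset.mul_sum]
  refine Finset.sum_congr rfl fun k _ => ?_
  rw [← map_pow, coeff_rescale]
  ring

lemma psubst_rescale_right (a : ℚ) (f g : ℚ⟦X⟧) :
    psubst f (rescale a g) = psubst (C a * f) g := by
  ext n
  rw [coeff_psubst, coeff_psubst]
  refine Finset.sum_congr rfl fun k _ => ?_
  rw [coeff_rescale, mul_pow, ← map_pow, coeff_C_mul]
  ring

lemma coeff_psubst_X_mul (u g : ℚ⟦X⟧) (n : ℕ) :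
    coeff n (psubst (X * u) g) =
      ∑ k ∈ Finset.range n, coeff k g * coeff (n - k) (u ^ k) +
        coeff n g * constantCoeff u ^ n := by
  rw [coeff_psubst, Finset.sum_range_succ, mul_pow, coeff_X_pow_mul', if_pos le_rfl,
    Nat.sub_self, coeff_zero_eq_constantCoeff_apply, map_pow]
  congr 1
  refine Finset.sum_congr rfl fun k hk => ?_
  rw [mul_pow, coeff_X_pow_mul', if_pos (Finset.mem_range.mp hk).le]

lemma psubst_X_mul_injective {u : ℚ⟦X⟧} (hu : constantCoeff u ≠ 0) :
    Function.Injective (psubst (X * u)) := by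
  intro g₁ g₂ hg
  ext n
  induction n using Nat.strong_induction_on with
  | _ n ih =>
    have h := congrArg (coeff n) hg
    rw [coeff_psubst_X_mul, coeff_psubst_X_mul,
      Finset.sum_congr rfl fun k hk => by rw [ih k (Finset.mem_range.mp hk)]] at h
    exact mul_right_cancel₀ (pow_ne_zero n hu) (add_left_cancel h)

/-- if `h` has constant coefficient `1`, is even (`h(-X) = h(X)`), and `ψ` has
zero constant coefficient and satisfies `ψ'(X / h(X)) = h(X)`, then `ψ` is odd: all
coefficients of `t^{2k}` vanish. -/
theorem statement2 (h ψ : ℚ⟦X⟧) (hh : PowerSeries.constantCoeff h = 1)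
    (heven : PowerSeries.rescale (-1 : ℚ) h = h)
    (hψ0 : PowerSeries.constantCoeff ψ = 0)
    (hψ : psubst (X * h⁻¹) (d⁄dX ℚ ψ) = h) :
    ∀ k : ℕ, PowerSeries.coeff (2 * k) ψ = 0 := by
  have hf_odd : rescale (-1 : ℚ) (X * h⁻¹) = C (-1) * (X * h⁻¹) := by
    rw [map_mul, rescale_neg_one_X, rescale_inv, heven, map_neg, map_one, neg_one_mul, neg_mul]
  have hψ'_even : rescale (-1 : ℚ) (d⁄dX ℚ ψ) = d⁄dX ℚ ψ := by
    refine psubst_X_mul_injective (u := h⁻¹) (by simp [hh]) ?_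
    rw [psubst_rescale_right, ← hf_odd, psubst_rescale_left, hψ, heven]
  exact coeff_two_mul_eq_zero_of_derivative_even hψ0 hψ'_even
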